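/- arXiv:0803.3170 — 2 statements merged into one kernel-verified Lean document; each statement's English description precedes it below -/
import Mathlib

section
/- There is an absolute constant C such that for every r ∈ ℓ²(ℤ) and every N ≥ 1, the triple sum Σ_{n>N} Σ_{p≠n} Σ_{k≠n} |r(p+k)|²/((n-p)²(n-k)²) ≤ C·(‖r‖²/N + E_N(r)²). -/
open scoped ENNReal

noncomputable def l2norm2 (r : ℤ → ℝ) : ℝ≥0∞ := ∑' k : ℤ, ENNReal.ofReal ((r k) ^ 2)

noncomputable def tailNorm2 (r : ℤ → ℝ) (N : ℕ) : ℝ≥0∞ :=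
  ∑' k : {k : ℤ // (N : ℤ) ≤ |k|}, ENNReal.ofReal ((r k.1) ^ 2)

/-!
Substituting `a = n - p`, `b = n - k` turns the sum into
`Σ_{n > N} Σ_{a, b} r(2n - a - b)² / (a² b²)`. If `|a|, |b| ≤ n / 2` then `2n - a - b ≥ n > N`,
and since `n ↦ 2n - a - b` is injective these terms contribute at most `(Σ 1/a²)² E_N(r)²`.
Otherwise one of `1/a²`, `1/b²` is at most `4/n²`; summing `r²` over the other free variable
gives `‖r‖²`, and `Σ_{n > N} 1/n² ≤ 1/N`.
-/

noncomputable def invSq (a : ℤ) : ℝ≥0∞ := ENNReal.ofReal ((a : ℝ) ^ 2)⁻¹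

lemma tsum_invSq_ne_top : ∑' a, invSq a ≠ ∞ := by
  simp only [invSq]
  rw [← ENNReal.ofReal_tsum_of_nonneg (fun a => by positivity)
    (by simpa using Real.summable_one_div_int_pow.mpr one_lt_two)]
  exact ENNReal.ofReal_ne_top

lemma tsum_invSq_ne_zero : ∑' a, invSq a ≠ 0 :=
  fun h => by simpa [invSq] using ENNReal.tsum_eq_zero.1 h 1

lemma invSq_le_four_mul {n a : ℤ} (hn : 0 < n) (h : n < 2 * |a|) :
    invSq a ≤ 4 * invSq n := by
  have hn' : (0 : ℝ) < n := by exact_mod_cast hn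
  have h' : (n : ℝ) < 2 * |(a : ℝ)| := by exact_mod_cast h
  rw [invSq, invSq, ← ENNReal.ofReal_ofNat, ← ENNReal.ofReal_mul (by norm_num)]
  refine ENNReal.ofReal_le_ofReal ?_
  calc ((a : ℝ) ^ 2)⁻¹ ≤ ((n : ℝ) ^ 2 / 4)⁻¹ := by
        refine inv_anti₀ (by positivity) ?_
        rw [← sq_abs (a : ℝ)]
        nlinarith
    _ = 4 * ((n : ℝ) ^ 2)⁻¹ := by rw [inv_div, div_eq_mul_inv]

lemma sum_range_inv_sq_add_one_le {N : ℕ} (hN : N ≠ 0) (M : ℕ) :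
    ∑ m ∈ Finset.range M, (((N + 1 + m : ℕ) : ℝ) ^ 2)⁻¹ ≤ (N : ℝ)⁻¹ := by
  have := sum_Ioc_inv_sq_le_sub (α := ℝ) hN (Nat.le_add_right N M)
  rw [← Finset.Ico_add_one_add_one_eq_Ioc, Finset.sum_Ico_eq_sum_range,
    Nat.add_sub_add_right, Nat.add_sub_cancel_left] at this
  exact this.trans (sub_le_self _ (by positivity))

lemma tsum_invSq_Ioi_le {N : ℕ} (hN : N ≠ 0) :
    ∑' n : {n : ℤ // (N : ℤ) < n}, invSq n ≤ (N : ℝ≥0∞)⁻¹ := by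
  let e : ℕ ≃ {n : ℤ // (N : ℤ) < n} :=
    { toFun := fun m => ⟨N + 1 + m, by omega⟩
      invFun := fun n => (n.1 - N - 1).toNat
      left_inv := fun m => by simp only; omega
      right_inv := fun n => Subtype.ext (by have := n.2; simp only; omega) }
  rw [← e.tsum_eq]
  refine ENNReal.tsum_le_of_sum_range_le fun M => ?_
  have := sum_range_inv_sq_add_one_le hN M
  simp only [e, Equiv.coe_fn_mk, invSq]
  rw [← ENNReal.ofReal_natCast, ← ENNReal.ofReal_inv_of_pos (by positivity),
    ← ENNReal.ofReal_sum_of_nonneg (fun _ _ => by positivity)]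
  refine ENNReal.ofReal_le_ofReal (le_of_eq_of_le ?_ this)
  push_cast
  ring_nf

lemma tsum_ofReal_sq_sub (r : ℤ → ℝ) (c : ℤ) :
    ∑' a, ENNReal.ofReal (r (c - a) ^ 2) = l2norm2 r :=
  (Equiv.subLeft c).tsum_eq fun m => ENNReal.ofReal (r m ^ 2)

lemma tsum_tsum_invSq_mul_sq_sub (r : ℤ → ℝ) (c : ℤ) :
    ∑' a, ∑' b, invSq b * ENNReal.ofReal (r (c - a - b) ^ 2) =
      (∑' b, invSq b) * l2norm2 r := by
  rw [ENNReal.tsum_comm, ← ENNReal.tsum_mul_right]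
  refine tsum_congr fun b => ?_
  simp_rw [ENNReal.tsum_mul_left, sub_right_comm c, tsum_ofReal_sq_sub]

noncomputable def tailSq (r : ℤ → ℝ) (N : ℕ) : ℤ → ℝ≥0∞ :=
  {m : ℤ | (N : ℤ) ≤ |m|}.indicator fun m => ENNReal.ofReal (r m ^ 2)

lemma tsum_tailSq (r : ℤ → ℝ) (N : ℕ) : ∑' m, tailSq r N m = tailNorm2 r N :=
  (tsum_subtype _ _).symm

lemma tsum_tailSq_two_mul_sub_le (r : ℤ → ℝ) (N : ℕ) (c : ℤ) :
    ∑' n : {n : ℤ // (N : ℤ) < n}, tailSq r N (2 * n - c) ≤ tailNorm2 r N := by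
  rw [← tsum_tailSq]
  refine ENNReal.tsum_comp_le_tsum_of_injective (fun x y h => ?_) (tailSq r N)
  exact Subtype.ext (by omega)

lemma tsum_ne_eq_tsum {α M : Type*} [AddCommMonoid M] [TopologicalSpace M] {f : α → M} {c : α}
    (hf : f c = 0) : ∑' x : {x // x ≠ c}, f x = ∑' x, f x :=
  tsum_subtype_eq_of_support_subset fun _ hx h => hx (h ▸ hf)

lemma tsum_ne_tsum_ne_eq_tsum_tsum_invSq (r : ℤ → ℝ) (n : ℤ) :
    ∑' p : {p : ℤ // p ≠ n}, ∑' k : {k : ℤ // k ≠ n},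
      ENNReal.ofReal (r (p.1 + k.1) ^ 2 / (((n : ℝ) - p.1) ^ 2 * ((n : ℝ) - k.1) ^ 2)) =
    ∑' a, ∑' b, invSq a * invSq b * ENNReal.ofReal (r (2 * n - a - b) ^ 2) := by
  let F (p k : ℤ) := ENNReal.ofReal (r (p + k) ^ 2 / (((n : ℝ) - p) ^ 2 * ((n : ℝ) - k) ^ 2))
  change ∑' p : {p : ℤ // p ≠ n}, ∑' k : {k : ℤ // k ≠ n}, F p k = _
  -- the excluded terms `p = n` and `k = n` vanish because `x / 0 = 0`
  rw [tsum_ne_eq_tsum (f := fun p => ∑' k : {k : ℤ // k ≠ n}, F p k) (by simp [F]),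
    ← (Equiv.subLeft n).tsum_eq]
  refine tsum_congr fun a => ?_
  rw [tsum_ne_eq_tsum (by simp [F]), ← (Equiv.subLeft n).tsum_eq]
  refine tsum_congr fun b => ?_
  simp only [F, Equiv.subLeft_apply, Int.cast_sub, sub_sub_cancel, invSq]
  rw [← ENNReal.ofReal_mul (by positivity), ← ENNReal.ofReal_mul (by positivity)]
  rw [show n - a + (n - b) = 2 * n - a - b by ring, div_eq_mul_inv, mul_inv, mul_comm]

lemma invSq_mul_invSq_mul_le (r : ℤ → ℝ) {N : ℕ} {n : ℤ} (hn : (N : ℤ) < n) (a b : ℤ) :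
    invSq a * invSq b * ENNReal.ofReal (r (2 * n - a - b) ^ 2) ≤
      invSq a * invSq b * tailSq r N (2 * n - a - b)
      + 4 * invSq n * (invSq b * ENNReal.ofReal (r (2 * n - a - b) ^ 2))
      + 4 * invSq n * (invSq a * ENNReal.ofReal (r (2 * n - a - b) ^ 2)) := by
  set x := ENNReal.ofReal (r (2 * n - a - b) ^ 2)
  have hn0 : 0 < n := by omega
  by_cases ha : n < 2 * |a|
  · calc invSq a * invSq b * x = invSq a * (invSq b * x) := mul_assoc _ _ _
      _ ≤ 4 * invSq n * (invSq b * x) := by gcongr; exact invSq_le_four_mul hn0 ha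
      _ ≤ _ := le_add_right le_add_self
  by_cases hb : n < 2 * |b|
  · calc invSq a * invSq b * x = invSq b * (invSq a * x) := by ring
      _ ≤ 4 * invSq n * (invSq a * x) := by gcongr; exact invSq_le_four_mul hn0 hb
      _ ≤ _ := le_add_self
  have htail : 2 * n - a - b ∈ {m : ℤ | (N : ℤ) ≤ |m|} := by
    show (N : ℤ) ≤ |2 * n - a - b|
    rw [not_lt] at ha hb
    linarith [le_abs_self a, le_abs_self b, le_abs_self (2 * n - a - b)]
  rw [tailSq, Set.indicator_of_mem htail]
  exact le_add_right le_self_add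

lemma tsum_invSq_mul_invSq_mul_tailSq_le (r : ℤ → ℝ) (N : ℕ) :
    ∑' n : {n : ℤ // (N : ℤ) < n}, ∑' a, ∑' b, invSq a * invSq b * tailSq r N (2 * n - a - b) ≤
      (∑' a, invSq a) * (∑' b, invSq b) * tailNorm2 r N := by
  calc _ = ∑' a, ∑' b, ∑' n : {n : ℤ // (N : ℤ) < n},
          invSq a * invSq b * tailSq r N (2 * n - (a + b)) := by
        rw [ENNReal.tsum_comm]
        simp_rw [sub_sub]
        exact tsum_congr fun a => ENNReal.tsum_comm
    _ ≤ ∑' a, ∑' b, invSq a * invSq b * tailNorm2 r N := by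
        gcongr with a b
        rw [ENNReal.tsum_mul_left]
        gcongr
        exact tsum_tailSq_two_mul_sub_le r N (a + b)
    _ = _ := by simp only [ENNReal.tsum_mul_right, ENNReal.tsum_mul_left]

lemma tsum_four_mul_invSq_mul_le (r : ℤ → ℝ) {N : ℕ} (hN : N ≠ 0) :
    ∑' n : {n : ℤ // (N : ℤ) < n}, ∑' a, ∑' b,
        4 * invSq n * (invSq b * ENNReal.ofReal (r (2 * n - a - b) ^ 2)) ≤
      4 * (N : ℝ≥0∞)⁻¹ * ((∑' b, invSq b) * l2norm2 r) := by
  simp only [ENNReal.tsum_mul_left, tsum_tsum_invSq_mul_sq_sub, ENNReal.tsum_mul_right]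
  gcongr
  exact tsum_invSq_Ioi_le hN

lemma tsum_four_mul_invSq_mul_le' (r : ℤ → ℝ) {N : ℕ} (hN : N ≠ 0) :
    ∑' n : {n : ℤ // (N : ℤ) < n}, ∑' a, ∑' b,
        4 * invSq n * (invSq a * ENNReal.ofReal (r (2 * n - a - b) ^ 2)) ≤
      4 * (N : ℝ≥0∞)⁻¹ * ((∑' a, invSq a) * l2norm2 r) := by
  refine le_of_eq_of_le (tsum_congr fun n => ?_) (tsum_four_mul_invSq_mul_le r hN)
  rw [ENNReal.tsum_comm]
  simp_rw [sub_right_comm (2 * (n : ℤ))]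

lemma tsum_kernel_le (r : ℤ → ℝ) {N : ℕ} (hN : N ≠ 0) :
    ∑' n : {n : ℤ // (N : ℤ) < n}, ∑' a, ∑' b,
        invSq a * invSq b * ENNReal.ofReal (r (2 * n - a - b) ^ 2) ≤
      (∑' a, invSq a) * (∑' a, invSq a) * tailNorm2 r N
        + 8 * (∑' a, invSq a) * (l2norm2 r / N) := by
  calc _ ≤ ∑' n : {n : ℤ // (N : ℤ) < n}, ∑' a, ∑' b,
          (invSq a * invSq b * tailSq r N (2 * n - a - b)
            + 4 * invSq n * (invSq b * ENNReal.ofReal (r (2 * n - a - b) ^ 2))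
            + 4 * invSq n * (invSq a * ENNReal.ofReal (r (2 * n - a - b) ^ 2))) := by
        gcongr with n a b
        exact invSq_mul_invSq_mul_le r n.2 a b
    _ ≤ (∑' a, invSq a) * (∑' a, invSq a) * tailNorm2 r N
          + 4 * (N : ℝ≥0∞)⁻¹ * ((∑' a, invSq a) * l2norm2 r)
          + 4 * (N : ℝ≥0∞)⁻¹ * ((∑' a, invSq a) * l2norm2 r) := by
        simp only [ENNReal.tsum_add]
        gcongr
        · exact tsum_invSq_mul_invSq_mul_tailSq_le r N
        · exact tsum_four_mul_invSq_mul_le r hN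
        · exact tsum_four_mul_invSq_mul_le' r hN
    _ = _ := by rw [div_eq_mul_inv]; ring

/-- There is an absolute constant `C` such that for every `r ∈ ℓ²(ℤ)` and `N ≥ 1`,
`Σ_{n>N} Σ_{p≠n} Σ_{k≠n} |r(p+k)|²/((n-p)²(n-k)²) ≤ C (‖r‖²/N + E_N(r)²)`. -/
theorem stmt5 : ∃ C : ℝ, 0 < C ∧ ∀ r : ℤ → ℝ, Summable (fun k => (r k) ^ 2) →
    ∀ N : ℕ, 1 ≤ N →
    ∑' n : {n : ℤ // (N : ℤ) < n}, ∑' p : {p : ℤ // p ≠ n.1}, ∑' k : {k : ℤ // k ≠ n.1},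
      ENNReal.ofReal ((r (p.1 + k.1)) ^ 2 /
        (((n.1 : ℝ) - (p.1 : ℝ)) ^ 2 * ((n.1 : ℝ) - (k.1 : ℝ)) ^ 2))
    ≤ ENNReal.ofReal C * (l2norm2 r / (N : ℝ≥0∞) + tailNorm2 r N) := by
  set G := ∑' a, invSq a
  have hG : G * (G + 8) ≠ ∞ :=
    ENNReal.mul_ne_top tsum_invSq_ne_top (ENNReal.add_ne_top.2 ⟨tsum_invSq_ne_top, by simp⟩)
  refine ⟨(G * (G + 8)).toReal,
    ENNReal.toReal_pos (mul_ne_zero tsum_invSq_ne_zero (by simp)) hG, ?_⟩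
  intro r _ N hN
  simp_rw [tsum_ne_tsum_ne_eq_tsum_tsum_invSq]
  calc _ ≤ G * G * tailNorm2 r N + 8 * G * (l2norm2 r / N) := tsum_kernel_le r (by omega)
    _ ≤ G * (G + 8) * tailNorm2 r N + G * (G + 8) * (l2norm2 r / N) := by
        gcongr ?_ * _ + ?_ * _
        · exact mul_le_mul_right le_self_add G
        · rw [mul_comm]
          exact mul_le_mul_right le_add_self G
    _ = ENNReal.ofReal (G * (G + 8)).toReal * (l2norm2 r / N + tailNorm2 r N) := by
        rw [ENNReal.ofReal_toReal hG]
        ring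
end

section
/- For any r ∈ ℓ²(ℤ) nonnegative and N ≥ 1: Σ_{n>N} Σ_{p≠±n} Σ_{k,i≠±n} (1/(n²-p²)²)·(2n/|n-i|)·r(n+i)²·r(k+p)² ≤ C·‖r‖²·(‖r‖²/N + E_N(r)²) for an absolute constant C. -/
open scoped ENNReal

/-!
Summing over `k` first bounds the `k`-sum by `‖r‖²`. The partial fraction identity
`1/(n² - p²) = (1/(2n)) (1/(n - p) + 1/(n + p))` gives `Σ_p 1/(n² - p²)² ≤ 2S/n²` with
`S = Σ_{m ≠ 0} 1/m²`, and AM-GM gives `(1/n²)(2n/|n - i|) ≤ 1/(n - i)² + 1/n²`. Hence the `n`-th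
term is at most `2S ‖r‖² (Σ_j r(j)²/(2n - j)² + ‖r‖²/n²)`. Summing over `n > N` uses
`Σ_{n>N} 1/n² ≤ 1/N`, while `Σ_{n>N} 1/(2n - j)²` is at most `S` for every `j` and at most `1/N`
for `|j| < N`; the indices `|j| ≥ N` produce the tail `E_N(r)²`.
-/

lemma one_div_sq_sub_sq_sq_le {x : ℝ} (hx : x ≠ 0) (y : ℝ) :
    1 / (x ^ 2 - y ^ 2) ^ 2 ≤ 1 / x ^ 2 * (1 / (x - y) ^ 2 + 1 / (x + y) ^ 2) := by
  rcases eq_or_ne ((x - y) * (x + y)) 0 with h | h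
  · rw [show x ^ 2 - y ^ 2 = (x - y) * (x + y) by ring, h]
    simp only [ne_eq, OfNat.ofNat_ne_zero, not_false_eq_true, zero_pow, div_zero]
    positivity
  obtain ⟨ha, hb⟩ := mul_ne_zero_iff.mp h
  have hxy : x ^ 2 - y ^ 2 ≠ 0 := by rwa [show x ^ 2 - y ^ 2 = (x - y) * (x + y) by ring]
  have hsplit : 1 / (x ^ 2 - y ^ 2) ^ 2 = 1 / x ^ 2 * ((1 / (x - y) + 1 / (x + y)) ^ 2 / 4) := by
    field_simp; ring
  have hsq := add_sq_le (a := 1 / (x - y)) (b := 1 / (x + y))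
  rw [one_div_pow, one_div_pow] at hsq
  rw [hsplit]
  gcongr
  linarith [show 0 ≤ 1 / (x - y) ^ 2 + 1 / (x + y) ^ 2 by positivity]

lemma one_div_sq_mul_two_mul_div_abs_le {x : ℝ} (hx : x ≠ 0) (z : ℝ) :
    1 / x ^ 2 * (2 * x / |z|) ≤ 1 / z ^ 2 + 1 / x ^ 2 := by
  calc 1 / x ^ 2 * (2 * x / |z|) = 2 * (1 / |z|) * (1 / x) := by field_simp
    _ ≤ (1 / |z|) ^ 2 + (1 / x) ^ 2 := two_mul_le_add_sq _ _
    _ = 1 / z ^ 2 + 1 / x ^ 2 := by rw [div_pow, div_pow, sq_abs, one_pow]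

/-- `Σ_{m ≠ 0} 1/m²`: the term `m = 0` is `1/0 = 0`. -/
noncomputable def invSqSum : ℝ≥0∞ := ∑' m : ℤ, ENNReal.ofReal (1 / (m : ℝ) ^ 2)

lemma invSqSum_ne_top : invSqSum ≠ ∞ := by
  rw [invSqSum, ← ENNReal.ofReal_tsum_of_nonneg (fun _ => by positivity)
    (Real.summable_one_div_int_pow.mpr one_lt_two)]
  exact ENNReal.ofReal_ne_top

lemma one_le_invSqSum : 1 ≤ invSqSum :=
  calc (1 : ℝ≥0∞) = ENNReal.ofReal (1 / ((1 : ℤ) : ℝ) ^ 2) := by simp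
    _ ≤ invSqSum := ENNReal.le_tsum 1

lemma tsum_ofReal_one_div_sq_comp_le {ι : Type*} {g : ι → ℤ} (hg : Function.Injective g) :
    ∑' x, ENNReal.ofReal (1 / (g x : ℝ) ^ 2) ≤ invSqSum :=
  ENNReal.tsum_comp_le_tsum_of_injective hg fun m : ℤ => ENNReal.ofReal (1 / (m : ℝ) ^ 2)

lemma tsum_ofReal_one_div_sq_gt_le {N : ℕ} (hN : N ≠ 0) :
    ∑' n : {n : ℤ // (N : ℤ) < n}, ENNReal.ofReal (1 / (n : ℝ) ^ 2) ≤ (N : ℝ≥0∞)⁻¹ := by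
  set g : ℕ → ℝ≥0∞ := fun m => if N < m then ENNReal.ofReal (1 / (m : ℝ) ^ 2) else 0
  have hinj : Function.Injective fun n : {n : ℤ // (N : ℤ) < n} => n.1.toNat := by
    intro a b h
    have := a.2
    have := b.2
    exact Subtype.ext (by simp only at h; omega)
  calc ∑' n : {n : ℤ // (N : ℤ) < n}, ENNReal.ofReal (1 / (n : ℝ) ^ 2)
      = ∑' n : {n : ℤ // (N : ℤ) < n}, g n.1.toNat := tsum_congr fun n => by
        have hn := n.2
        have hcast : ((n.1.toNat : ℕ) : ℝ) = n.1 := by exact_mod_cast Int.toNat_of_nonneg (by omega)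
        simp only [g, if_pos (by omega : N < n.1.toNat), hcast]
    _ ≤ ∑' m, g m := ENNReal.tsum_comp_le_tsum_of_injective hinj g
    _ ≤ (N : ℝ≥0∞)⁻¹ := ENNReal.tsum_le_of_sum_range_le fun M => ?_
  calc ∑ m ∈ Finset.range M, g m
      = ∑ m ∈ (Finset.range M).filter (N < ·), ENNReal.ofReal (1 / (m : ℝ) ^ 2) :=
        (Finset.sum_filter _ _).symm
    _ ≤ ∑ m ∈ Finset.Ioc N (N + M), ENNReal.ofReal (((m : ℝ) ^ 2)⁻¹) := by
        simp only [one_div]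
        exact Finset.sum_le_sum_of_subset fun m hm => by
          simp only [Finset.mem_filter, Finset.mem_range, Finset.mem_Ioc] at hm ⊢
          omega
    _ = ENNReal.ofReal (∑ m ∈ Finset.Ioc N (N + M), ((m : ℝ) ^ 2)⁻¹) :=
        (ENNReal.ofReal_sum_of_nonneg fun _ _ => by positivity).symm
    _ ≤ ENNReal.ofReal ((N : ℝ)⁻¹) := ENNReal.ofReal_le_ofReal
        ((sum_Ioc_inv_sq_le_sub hN (by omega)).trans (sub_le_self _ (by positivity)))
    _ = (N : ℝ≥0∞)⁻¹ := by
        rw [ENNReal.ofReal_inv_of_pos (by positivity), ENNReal.ofReal_natCast]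

lemma tsum_ofReal_one_div_sq_sub_sq_le {n : ℤ} (hn : n ≠ 0) :
    ∑' p : {p : ℤ // p ≠ n ∧ p ≠ -n}, ENNReal.ofReal (1 / ((n : ℝ) ^ 2 - (p.1 : ℝ) ^ 2) ^ 2)
      ≤ 2 * invSqSum * ENNReal.ofReal (1 / (n : ℝ) ^ 2) := by
  have hn' : (n : ℝ) ≠ 0 := by exact_mod_cast hn
  have hsub : ∑' p : ℤ, ENNReal.ofReal (1 / ((n : ℝ) - p) ^ 2) ≤ invSqSum := by
    simpa using tsum_ofReal_one_div_sq_comp_le (sub_right_injective (b := n))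
  have hadd : ∑' p : ℤ, ENNReal.ofReal (1 / ((n : ℝ) + p) ^ 2) ≤ invSqSum := by
    simpa using tsum_ofReal_one_div_sq_comp_le (add_right_injective n)
  calc ∑' p : {p : ℤ // p ≠ n ∧ p ≠ -n}, ENNReal.ofReal (1 / ((n : ℝ) ^ 2 - (p.1 : ℝ) ^ 2) ^ 2)
      ≤ ∑' p : ℤ, ENNReal.ofReal (1 / ((n : ℝ) ^ 2 - (p : ℝ) ^ 2) ^ 2) :=
        ENNReal.tsum_comp_le_tsum_of_injective Subtype.val_injective
          fun p : ℤ => ENNReal.ofReal (1 / ((n : ℝ) ^ 2 - (p : ℝ) ^ 2) ^ 2)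
    _ ≤ ∑' p : ℤ, ENNReal.ofReal (1 / (n : ℝ) ^ 2) *
          (ENNReal.ofReal (1 / ((n : ℝ) - p) ^ 2) + ENNReal.ofReal (1 / ((n : ℝ) + p) ^ 2)) :=
        ENNReal.tsum_le_tsum fun p => by
          rw [← ENNReal.ofReal_add (by positivity) (by positivity),
            ← ENNReal.ofReal_mul (by positivity)]
          exact ENNReal.ofReal_le_ofReal (one_div_sq_sub_sq_sq_le hn' p)
    _ ≤ ENNReal.ofReal (1 / (n : ℝ) ^ 2) * (invSqSum + invSqSum) := by
        rw [ENNReal.tsum_mul_left, ENNReal.tsum_add]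
        gcongr
    _ = 2 * invSqSum * ENNReal.ofReal (1 / (n : ℝ) ^ 2) := by ring

lemma ofReal_one_div_sq_mul_tsum_le (r : ℤ → ℝ) {n : ℤ} (hn : n ≠ 0) :
    ENNReal.ofReal (1 / (n : ℝ) ^ 2) * ∑' i : {i : ℤ // i ≠ n ∧ i ≠ -n},
        ENNReal.ofReal (2 * (n : ℝ) / |(n : ℝ) - (i.1 : ℝ)| * r (n + i.1) ^ 2)
      ≤ ∑' j : ℤ, ENNReal.ofReal (1 / (2 * (n : ℝ) - j) ^ 2) * ENNReal.ofReal (r j ^ 2)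
        + ENNReal.ofReal (1 / (n : ℝ) ^ 2) * l2norm2 r := by
  have hn' : (n : ℝ) ≠ 0 := by exact_mod_cast hn
  have hinj : Function.Injective fun i : {i : ℤ // i ≠ n ∧ i ≠ -n} => n + i.1 :=
    (add_right_injective n).comp Subtype.val_injective
  rw [← ENNReal.tsum_mul_left]
  calc ∑' i : {i : ℤ // i ≠ n ∧ i ≠ -n}, ENNReal.ofReal (1 / (n : ℝ) ^ 2) *
        ENNReal.ofReal (2 * (n : ℝ) / |(n : ℝ) - (i.1 : ℝ)| * r (n + i.1) ^ 2)
      ≤ ∑' i : {i : ℤ // i ≠ n ∧ i ≠ -n},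
          (ENNReal.ofReal (1 / (2 * (n : ℝ) - ((n + i.1 : ℤ) : ℝ)) ^ 2) *
              ENNReal.ofReal (r (n + i.1) ^ 2)
            + ENNReal.ofReal (1 / (n : ℝ) ^ 2) * ENNReal.ofReal (r (n + i.1) ^ 2)) :=
        ENNReal.tsum_le_tsum fun i => by
          rw [← add_mul, ← ENNReal.ofReal_add (by positivity) (by positivity),
            ← ENNReal.ofReal_mul (by positivity), ← mul_assoc,
            ← ENNReal.ofReal_mul (by positivity)]
          refine ENNReal.ofReal_le_ofReal (mul_le_mul_of_nonneg_right ?_ (sq_nonneg _))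
          have hcast : 2 * (n : ℝ) - ((n + i.1 : ℤ) : ℝ) = n - i.1 := by push_cast; ring
          rw [hcast]
          exact one_div_sq_mul_two_mul_div_abs_le hn' _
    _ ≤ _ := by
        rw [ENNReal.tsum_add, ENNReal.tsum_mul_left]
        gcongr
        · exact ENNReal.tsum_comp_le_tsum_of_injective hinj
            fun j : ℤ => ENNReal.ofReal (1 / (2 * (n : ℝ) - j) ^ 2) * ENNReal.ofReal (r j ^ 2)
        · exact ENNReal.tsum_comp_le_tsum_of_injective hinj fun j => ENNReal.ofReal (r j ^ 2)

lemma inner_tsums_le (r : ℤ → ℝ) {n : ℤ} (hn : n ≠ 0) :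
    ∑' p : {p : ℤ // p ≠ n ∧ p ≠ -n}, ∑' k : {k : ℤ // k ≠ n ∧ k ≠ -n},
      ∑' i : {i : ℤ // i ≠ n ∧ i ≠ -n},
      ENNReal.ofReal ((1 / ((n : ℝ) ^ 2 - (p.1 : ℝ) ^ 2) ^ 2) *
        (2 * (n : ℝ) / |(n : ℝ) - (i.1 : ℝ)|) * (r (n + i.1)) ^ 2 * (r (k.1 + p.1)) ^ 2)
    ≤ 2 * invSqSum * l2norm2 r *
      (∑' j : ℤ, ENNReal.ofReal (1 / (2 * (n : ℝ) - j) ^ 2) * ENNReal.ofReal (r j ^ 2)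
        + ENNReal.ofReal (1 / (n : ℝ) ^ 2) * l2norm2 r) := by
  have hshift : ∀ p : ℤ, ∑' k : {k : ℤ // k ≠ n ∧ k ≠ -n}, ENNReal.ofReal (r (k.1 + p) ^ 2)
      ≤ l2norm2 r := fun p =>
    ENNReal.tsum_comp_le_tsum_of_injective ((add_left_injective p).comp Subtype.val_injective)
      fun j => ENNReal.ofReal (r j ^ 2)
  set I := ∑' i : {i : ℤ // i ≠ n ∧ i ≠ -n},
    ENNReal.ofReal (2 * (n : ℝ) / |(n : ℝ) - (i.1 : ℝ)| * r (n + i.1) ^ 2)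
  have hfactor : ∀ (p k i : ℤ), ENNReal.ofReal ((1 / ((n : ℝ) ^ 2 - (p : ℝ) ^ 2) ^ 2) *
        (2 * (n : ℝ) / |(n : ℝ) - (i : ℝ)|) * (r (n + i)) ^ 2 * (r (k + p)) ^ 2)
      = ENNReal.ofReal (1 / ((n : ℝ) ^ 2 - (p : ℝ) ^ 2) ^ 2) * ENNReal.ofReal (r (k + p) ^ 2) *
          ENNReal.ofReal (2 * (n : ℝ) / |(n : ℝ) - (i : ℝ)| * r (n + i) ^ 2) := fun p k i => by
    rw [← ENNReal.ofReal_mul (by positivity), ← ENNReal.ofReal_mul (by positivity)]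
    ring_nf
  calc _ = (∑' p : {p : ℤ // p ≠ n ∧ p ≠ -n},
          ENNReal.ofReal (1 / ((n : ℝ) ^ 2 - (p.1 : ℝ) ^ 2) ^ 2) *
            ∑' k : {k : ℤ // k ≠ n ∧ k ≠ -n}, ENNReal.ofReal (r (k.1 + p.1) ^ 2)) * I := by
        simp only [hfactor, I, ENNReal.tsum_mul_left, ENNReal.tsum_mul_right]
    _ ≤ (∑' p : {p : ℤ // p ≠ n ∧ p ≠ -n},
          ENNReal.ofReal (1 / ((n : ℝ) ^ 2 - (p.1 : ℝ) ^ 2) ^ 2) * l2norm2 r) * I := by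
        gcongr with p
        exact hshift p.1
    _ ≤ 2 * invSqSum * ENNReal.ofReal (1 / (n : ℝ) ^ 2) * l2norm2 r * I := by
        rw [ENNReal.tsum_mul_right]
        gcongr
        exact tsum_ofReal_one_div_sq_sub_sq_le hn
    _ = 2 * invSqSum * l2norm2 r * (ENNReal.ofReal (1 / (n : ℝ) ^ 2) * I) := by ring
    _ ≤ _ := mul_le_mul_right (ofReal_one_div_sq_mul_tsum_le r hn) _

lemma tsum_tsum_ofReal_one_div_sq_two_mul_sub_le (r : ℤ → ℝ) {N : ℕ} (hN : N ≠ 0) :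
    ∑' n : {n : ℤ // (N : ℤ) < n}, ∑' j : ℤ,
        ENNReal.ofReal (1 / (2 * (n : ℝ) - j) ^ 2) * ENNReal.ofReal (r j ^ 2)
      ≤ invSqSum * tailNorm2 r N + (N : ℝ≥0∞)⁻¹ * l2norm2 r := by
  set w : ℤ → ℝ≥0∞ := fun j => ∑' n : {n : ℤ // (N : ℤ) < n},
    ENNReal.ofReal (1 / (2 * (n : ℝ) - j) ^ 2)
  have hfar : ∀ j, w j ≤ invSqSum := fun j => by
    have hinj : Function.Injective fun n : {n : ℤ // (N : ℤ) < n} => 2 * n.1 - j :=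
      fun a b h => Subtype.ext (by simp only at h; omega)
    simpa [w] using tsum_ofReal_one_div_sq_comp_le hinj
  have hnear : ∀ j : ℤ, |j| < N → w j ≤ (N : ℝ≥0∞)⁻¹ := fun j hj => by
    refine (ENNReal.tsum_le_tsum fun n => ENNReal.ofReal_le_ofReal ?_).trans
      (tsum_ofReal_one_div_sq_gt_le hN)
    have hn := n.2
    have hjn : (n.1 : ℝ) ≤ 2 * n.1 - j := by
      have := (abs_lt.mp hj).2
      exact_mod_cast (by omega : n.1 ≤ 2 * n.1 - j)
    have hn0 : (0 : ℝ) < n.1 := by exact_mod_cast (by omega : 0 < n.1)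
    gcongr
  calc _ = ∑' j : ℤ, w j * ENNReal.ofReal (r j ^ 2) := by
        rw [ENNReal.tsum_comm]
        exact tsum_congr fun j => ENNReal.tsum_mul_right
    _ = ∑' j : {j : ℤ // (N : ℤ) ≤ |j|}, w j * ENNReal.ofReal (r j ^ 2)
          + ∑' j : ↥{j : ℤ | (N : ℤ) ≤ |j|}ᶜ, w j * ENNReal.ofReal (r j ^ 2) :=
        (ENNReal.summable.tsum_add_tsum_compl ENNReal.summable).symm
    _ ≤ ∑' j : {j : ℤ // (N : ℤ) ≤ |j|}, invSqSum * ENNReal.ofReal (r j ^ 2)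
          + ∑' j : ↥{j : ℤ | (N : ℤ) ≤ |j|}ᶜ, (N : ℝ≥0∞)⁻¹ * ENNReal.ofReal (r j ^ 2) := by
        gcongr with j j
        · exact hfar j
        · exact hnear j (not_le.mp j.2)
    _ ≤ _ := by
        rw [ENNReal.tsum_mul_left, ENNReal.tsum_mul_left]
        exact add_le_add le_rfl (mul_le_mul_right (ENNReal.tsum_comp_le_tsum_of_injective
          Subtype.val_injective fun j => ENNReal.ofReal (r j ^ 2)) _)

/-- For any nonnegative `r ∈ ℓ²(ℤ)` and `N ≥ 1`:
`Σ_{n>N} Σ_{p≠±n} Σ_{k,i≠±n} (1/(n²-p²)²)(2n/|n-i|) r(n+i)² r(k+p)²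
  ≤ C ‖r‖² (‖r‖²/N + E_N(r)²)` for an absolute constant `C`. -/
theorem stmt18 : ∃ C : ℝ, 0 < C ∧ ∀ r : ℤ → ℝ, (∀ k, 0 ≤ r k) →
    Summable (fun k => (r k) ^ 2) → ∀ N : ℕ, 1 ≤ N →
    ∑' n : {n : ℤ // (N : ℤ) < n}, ∑' p : {p : ℤ // p ≠ n.1 ∧ p ≠ -n.1},
      ∑' k : {k : ℤ // k ≠ n.1 ∧ k ≠ -n.1}, ∑' i : {i : ℤ // i ≠ n.1 ∧ i ≠ -n.1},
      ENNReal.ofReal ((1 / ((n.1 : ℝ) ^ 2 - (p.1 : ℝ) ^ 2) ^ 2) *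
        (2 * (n.1 : ℝ) / |(n.1 : ℝ) - (i.1 : ℝ)|) *
        (r (n.1 + i.1)) ^ 2 * (r (k.1 + p.1)) ^ 2)
    ≤ ENNReal.ofReal C * l2norm2 r * (l2norm2 r / (N : ℝ≥0∞) + tailNorm2 r N) := by
  set S := invSqSum
  have hC : 2 * S * (S + 2) ≠ ∞ := by
    have := invSqSum_ne_top
    finiteness
  have hC0 : 2 * S * (S + 2) ≠ 0 := by
    have := one_le_invSqSum
    positivity
  refine ⟨(2 * S * (S + 2)).toReal, ENNReal.toReal_pos hC0 hC, fun r _ _ N hN => ?_⟩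
  set L := l2norm2 r
  set E := tailNorm2 r N
  calc _ ≤ ∑' n : {n : ℤ // (N : ℤ) < n}, 2 * S * L *
          (∑' j : ℤ, ENNReal.ofReal (1 / (2 * (n : ℝ) - j) ^ 2) * ENNReal.ofReal (r j ^ 2)
            + ENNReal.ofReal (1 / (n : ℝ) ^ 2) * L) :=
        ENNReal.tsum_le_tsum fun n => inner_tsums_le r (by have := n.2; omega)
    _ ≤ 2 * S * L * ((S * E + (N : ℝ≥0∞)⁻¹ * L) + (N : ℝ≥0∞)⁻¹ * L) := by
        rw [ENNReal.tsum_mul_left, ENNReal.tsum_add, ENNReal.tsum_mul_right]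
        gcongr
        · exact tsum_tsum_ofReal_one_div_sq_two_mul_sub_le r (by omega)
        · exact tsum_ofReal_one_div_sq_gt_le (by omega)
    _ = 2 * S * L * (S * E + 2 * (L / N)) := by rw [div_eq_mul_inv]; ring
    _ ≤ 2 * S * L * ((S + 2) * E + (S + 2) * (L / N)) := by
        gcongr
        · exact le_self_add
        · exact le_add_self
    _ = ENNReal.ofReal (2 * S * (S + 2)).toReal * L * (L / N + E) := by
        rw [ENNReal.ofReal_toReal hC]
        ring
end
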